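/- arXiv:2212.03536 — 8 statements merged into one kernel-verified Lean document; each statement's English description precedes it below -/
import Mathlib

section
/- Let 0 < α < 1, A = -log(1-α), and define h(s) = s + α(1-αs)(1 + log(1-αs)/A) for real s with |s| ≤ 1 (interpreting at s = 1/α by continuity is not needed since α < 1). Then h(1) = 1, h(0) = α, and for every integer n ≥ 2 the n-th Taylor coefficient of h at 0 (i.e., the n-th derivative of h at 0 divided by n!) equals (α/A)·α^n/(n(n-1)), which is strictly positive. -/
theorem stmt_1 (α : ℝ) (hα0 : 0 < α) (hα1 : α < 1)
    (A : ℝ) (hA : A = -Real.log (1 - α))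
    (h : ℝ → ℝ)
    (hh : ∀ s : ℝ, h s = s + α * (1 - α * s) * (1 + Real.log (1 - α * s) / A)) :
    h 1 = 1 ∧ h 0 = α ∧
      ∀ n : ℕ, 2 ≤ n →
        iteratedDeriv n h 0 / (n.factorial : ℝ) = (α / A) * α ^ n / (n * (n - 1)) ∧
        0 < (α / A) * α ^ n / (n * (n - 1)) := by
  have hl : Real.log (1 - α) < 0 := Real.log_neg (by linarith) (by linarith)
  have hA0 : 0 < A := by rw [hA]; linarith
  have hAne : A ≠ 0 := ne_of_gt hA0
  -- open set
  have hU : IsOpen {s : ℝ | 0 < 1 - α * s} :=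
    isOpen_lt continuous_const (continuous_const.sub (continuous_const.mul continuous_id))
  -- inner affine derivative
  have d1 : ∀ s : ℝ, HasDerivAt (fun t : ℝ => 1 - α * t) (-α) s := by
    intro s
    simpa using ((hasDerivAt_id s).const_mul α).const_sub 1
  -- log derivative
  have d2 : ∀ s : ℝ, 0 < 1 - α * s →
      HasDerivAt (fun t : ℝ => Real.log (1 - α * t)) (-α / (1 - α * s)) s := by
    intro s hs
    have := (Real.hasDerivAt_log (ne_of_gt hs)).comp s (d1 s)
    simpa [div_eq_mul_inv, mul_comm, Function.comp_def] using this
  -- derivative of h on the region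
  have dh : ∀ s : ℝ, 0 < 1 - α * s →
      HasDerivAt h (1 - α ^ 2 - (α ^ 2 / A) * (Real.log (1 - α * s) + 1)) s := by
    intro s hs
    have hne : (1 - α * s) ≠ 0 := ne_of_gt hs
    have d3 : HasDerivAt (fun t : ℝ => 1 + Real.log (1 - α * t) / A)
        ((-α / (1 - α * s)) / A) s := ((d2 s hs).div_const A).const_add 1
    have d4 : HasDerivAt (fun t : ℝ => α * (1 - α * t)) (α * (-α)) s := (d1 s).const_mul α
    have d5 := d4.fun_mul d3
    have d6 : HasDerivAt (fun t : ℝ => t + α * (1 - α * t) * (1 + Real.log (1 - α * t) / A)) _ s :=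
      (hasDerivAt_id s).fun_add d5
    have heq : h = fun t : ℝ => t + α * (1 - α * t) * (1 + Real.log (1 - α * t) / A) :=
      funext hh
    rw [heq]
    convert d6 using 1
    field_simp
    ring
  have hd1 : ∀ s : ℝ, 0 < 1 - α * s →
      deriv h s = 1 - α ^ 2 - (α ^ 2 / A) * (Real.log (1 - α * s) + 1) := fun s hs => (dh s hs).deriv
  -- main induction
  have key : ∀ n : ℕ, ∀ s : ℝ, 0 < 1 - α * s →
      iteratedDeriv (n + 2) h s =
        (α / A) * α ^ (n + 2) * (n.factorial : ℝ) / (1 - α * s) ^ (n + 1) := by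
    intro n
    induction n with
    | zero =>
      intro s hs
      have hev : deriv h =ᶠ[nhds s]
          (fun t => 1 - α ^ 2 - (α ^ 2 / A) * (Real.log (1 - α * t) + 1)) :=
        Filter.eventuallyEq_of_mem (hU.mem_nhds hs) (fun t ht => hd1 t ht)
      have hne : (1 - α * s) ≠ 0 := ne_of_gt hs
      have dg : HasDerivAt (fun t => 1 - α ^ 2 - (α ^ 2 / A) * (Real.log (1 - α * t) + 1))
          (-((α ^ 2 / A) * (-α / (1 - α * s)))) s := by
        exact (((d2 s hs).add_const 1).const_mul (α ^ 2 / A)).const_sub (1 - α ^ 2)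
      have : iteratedDeriv 2 h s = deriv (deriv h) s := by
        rw [iteratedDeriv_succ, iteratedDeriv_one]
      rw [this, hev.deriv_eq, dg.deriv]
      field_simp
      ring
    | succ n ih =>
      intro s hs
      have hne : (1 - α * s) ≠ 0 := ne_of_gt hs
      have hev : iteratedDeriv (n + 2) h =ᶠ[nhds s]
          (fun t => (α / A) * α ^ (n + 2) * (n.factorial : ℝ) * ((1 - α * t) ^ (n + 1))⁻¹) := by
        refine Filter.eventuallyEq_of_mem (hU.mem_nhds hs) (fun t ht => ?_)
        rw [ih t ht, div_eq_mul_inv]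
      have dpow : HasDerivAt (fun t : ℝ => (1 - α * t) ^ (n + 1))
          ((↑(n + 1) : ℝ) * (1 - α * s) ^ n * (-α)) s := by
        simpa using (d1 s).fun_pow (n + 1)
      have dinv := dpow.fun_inv (pow_ne_zero (n + 1) hne)
      have dg := dinv.const_mul ((α / A) * α ^ (n + 2) * (n.factorial : ℝ))
      have : iteratedDeriv (n + 1 + 2) h s = deriv (iteratedDeriv (n + 2) h) s := by
        rw [iteratedDeriv_succ]
      rw [this, hev.deriv_eq, dg.deriv]
      have hfact : ((n + 1).factorial : ℝ) = (n + 1) * (n.factorial : ℝ) := by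
        push_cast [Nat.factorial_succ]; ring
      rw [hfact]
      field_simp
      push_cast
      ring
  refine ⟨?_, ?_, ?_⟩
  · rw [hh 1, hA]
    have : Real.log (1 - α * 1) = Real.log (1 - α) := by norm_num
    rw [this, div_neg, div_self (ne_of_lt hl)]
    ring
  · rw [hh 0]
    simp [Real.log_one]
  · intro n hn
    obtain ⟨m, rfl⟩ : ∃ m, n = m + 2 := ⟨n - 2, by omega⟩
    have h0 : (0 : ℝ) < 1 - α * 0 := by norm_num
    have hkey := key m 0 h0
    have hpos : 0 < (α / A) * α ^ (m + 2) / ((m + 2 : ℕ) * ((m + 2 : ℕ) - 1) : ℝ) := by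
      have h1 : (0:ℝ) < ((m + 2 : ℕ) : ℝ) * (((m + 2 : ℕ) : ℝ) - 1) := by
        push_cast
        nlinarith [Nat.cast_nonneg (α := ℝ) m]
      exact div_pos (mul_pos (div_pos hα0 hA0) (pow_pos hα0 _)) h1
    constructor
    · norm_num at hkey
      rw [hkey]
      have hfact : (((m + 2).factorial : ℝ)) = ((m:ℝ) + 2) * ((m:ℝ) + 1) * (m.factorial : ℝ) := by
        rw [Nat.factorial_succ, Nat.factorial_succ]; push_cast; ring
      have hc : (((m + 2 : ℕ) : ℝ)) * (((m + 2 : ℕ) : ℝ) - 1) = ((m:ℝ) + 2) * ((m:ℝ) + 1) := by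
        push_cast; ring
      have hfne : (m.factorial : ℝ) ≠ 0 := by positivity
      have h4 : (((m + 2).factorial : ℝ)) ≠ 0 := by positivity
      have h5 : ((m:ℝ) + 2) * ((m:ℝ) + 1) ≠ 0 := by positivity
      rw [hfact, hc] at *
      rw [div_eq_div_iff (by positivity) h5]
      ring
    · convert hpos using 2
end

section
/- Let 0 < α < 1, A = -log(1-α), K > 0, f(x) = (Kα/A)(1-αx)(A + log(1-αx)), M(t) = exp(-Kα²t/A), and F(t,s) = (1/α)·(1 - (1-α)·((1-αs)/(1-α))^{M(t)}) (real power). Then for every t ≥ 0 and every s ∈ [0,1], F satisfies the backward Kolmogorov equation ∂F/∂t (t,s) = f(F(t,s)), together with the initial condition F(0,s) = s and the normalization F(t,1) = 1. -/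
theorem stmt_5 (α : ℝ) (hα0 : 0 < α) (hα1 : α < 1)
    (A : ℝ) (hA : A = -Real.log (1 - α))
    (K : ℝ) (hK : 0 < K)
    (f : ℝ → ℝ)
    (hf : ∀ x : ℝ, f x = (K * α / A) * (1 - α * x) * (A + Real.log (1 - α * x)))
    (M : ℝ → ℝ) (hM : ∀ t : ℝ, M t = Real.exp (-(K * α ^ 2) * t / A))
    (F : ℝ → ℝ → ℝ)
    (hF : ∀ t s : ℝ,
      F t s = (1 / α) * (1 - (1 - α) * ((1 - α * s) / (1 - α)) ^ (M t))) :
    (∀ t : ℝ, 0 ≤ t → ∀ s ∈ Set.Icc (0 : ℝ) 1,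
        deriv (fun τ => F τ s) t = f (F t s)) ∧
      (∀ s ∈ Set.Icc (0 : ℝ) 1, F 0 s = s) ∧
      (∀ t : ℝ, 0 ≤ t → F t 1 = 1) := by
  have h1α : (0:ℝ) < 1 - α := by linarith
  have h1αne : (1:ℝ) - α ≠ 0 := ne_of_gt h1α
  have hA0 : 0 < A := by
    rw [hA]
    have : Real.log (1 - α) < 0 := Real.log_neg h1α (by linarith)
    linarith
  have hAne : A ≠ 0 := ne_of_gt hA0
  have hαne : α ≠ 0 := ne_of_gt hα0
  have hlog1α : Real.log (1 - α) = -A := by rw [hA]; ring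
  refine ⟨?_, ?_, ?_⟩
  · intro t ht s hs
    obtain ⟨hs0, hs1⟩ := hs
    have hus : 0 < 1 - α * s := by nlinarith
    set u : ℝ := (1 - α * s) / (1 - α) with hu
    have hu0 : 0 < u := div_pos hus h1α
    set c : ℝ := -(K * α ^ 2) / A with hc
    have hMt : ∀ τ : ℝ, M τ = Real.exp (c * τ) := by
      intro τ; rw [hM τ]; congr 1; rw [hc]; ring
    have hFeq : (fun τ => F τ s)
        = fun τ => (1 / α) * (1 - (1 - α) * Real.exp (Real.log u * Real.exp (c * τ))) := by
      funext τ
      rw [hF τ s, ← hu, Real.rpow_def_of_pos hu0, hMt τ]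
    -- derivative
    set E : ℝ := Real.exp (Real.log u * Real.exp (c * t)) with hE
    have h1 : HasDerivAt (fun τ : ℝ => c * τ) c t := by
      simpa using (hasDerivAt_id t).const_mul c
    have h2 := h1.exp
    have h3 := h2.const_mul (Real.log u)
    have h4 := h3.exp
    have h5 := (h4.const_mul (1 - α)).const_sub 1
    have h6 := h5.const_mul (1 / α)
    have hd : deriv (fun τ => F τ s)
        = deriv (fun τ => (1 / α) * (1 - (1 - α) * Real.exp (Real.log u * Real.exp (c * τ)))) := by
      rw [hFeq]
    rw [hd, h6.deriv]
    -- now compute the RHS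
    have hαF : 1 - α * F t s = (1 - α) * E := by
      rw [hF t s, ← hu, Real.rpow_def_of_pos hu0, hMt t, ← hE]
      field_simp
      ring
    rw [hf, hαF, Real.log_mul h1αne (Real.exp_ne_zero _), Real.log_exp, hlog1α, hE]
    rw [hc]
    field_simp
    ring
  · intro s hs
    have hM0 : M 0 = 1 := by rw [hM 0]; norm_num
    rw [hF 0 s, hM0, Real.rpow_one]
    field_simp
    ring
  · intro t ht
    have : (1 - α * 1) / (1 - α) = 1 := by field_simp
    rw [hF t 1, this, Real.one_rpow]
    field_simp
    ring
end

section
/- Let 0 < α < 1, A = -log(1-α), K > 0, f(s) = (Kα/A)(1-αs)(A + log(1-αs)), M(t) = exp(-Kα²t/A), and F(t,s) = (1/α)(1 - (1-α)((1-αs)/(1-α))^{M(t)}). Then for every t ≥ 0 and s ∈ [0,1), F satisfies the forward Kolmogorov equation ∂F/∂t (t,s) = f(s) · ∂F/∂s (t,s). -/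
theorem stmt_7 (α : ℝ) (hα0 : 0 < α) (hα1 : α < 1)
    (A : ℝ) (hA : A = -Real.log (1 - α))
    (K : ℝ) (hK : 0 < K)
    (f : ℝ → ℝ)
    (hf : ∀ x : ℝ, f x = (K * α / A) * (1 - α * x) * (A + Real.log (1 - α * x)))
    (M : ℝ → ℝ) (hM : ∀ t : ℝ, M t = Real.exp (-(K * α ^ 2) * t / A))
    (F : ℝ → ℝ → ℝ)
    (hF : ∀ t s : ℝ,
      F t s = (1 / α) * (1 - (1 - α) * ((1 - α * s) / (1 - α)) ^ (M t))) :
    ∀ t : ℝ, 0 ≤ t → ∀ s ∈ Set.Ico (0 : ℝ) 1,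
      deriv (fun τ => F τ s) t = f s * deriv (fun x => F t x) s := by
  intro t ht s hs
  obtain ⟨hs0, hs1⟩ := hs
  have h1α : (0:ℝ) < 1 - α := by linarith
  have h1αs : (0:ℝ) < 1 - α * s := by nlinarith
  have hA0 : 0 < A := by
    rw [hA]
    have := Real.log_neg h1α (by linarith)
    linarith
  set c : ℝ := -(K * α ^ 2) / A with hc
  set u : ℝ := (1 - α * s) / (1 - α) with hu
  have hu0 : 0 < u := div_pos h1αs h1α
  set m : ℝ := M t with hm
  have hmval : m = Real.exp (c * t) := by
    rw [hm, hM, hc]; ring_nf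
  -- log u
  have hLog : Real.log u = Real.log (1 - α * s) + A := by
    rw [hu, Real.log_div (ne_of_gt h1αs) (ne_of_gt h1α), hA]; ring
  -- time derivative
  have hMd : HasDerivAt M (Real.exp (c * t) * c) t := by
    have h0 : HasDerivAt (fun τ => Real.exp (c * τ)) (Real.exp (c * t) * c) t := by
      simpa using ((hasDerivAt_id t).const_mul c).exp
    have hfun : M = fun τ => Real.exp (c * τ) := by
      funext τ; rw [hM, hc]; ring_nf
    rw [hfun]; exact h0
  have hFt : HasDerivAt (fun τ => F τ s)
      ((1/α) * (0 - (1 - α) * (Real.exp (Real.log u * m) *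
        (Real.log u * (Real.exp (c * t) * c))))) t := by
    have h2 : HasDerivAt (fun τ => Real.log u * M τ)
        (Real.log u * (Real.exp (c * t) * c)) t := hMd.const_mul _
    have h3 : HasDerivAt (fun τ => Real.exp (Real.log u * M τ))
        (Real.exp (Real.log u * m) * (Real.log u * (Real.exp (c * t) * c))) t := by
      have := h2.exp
      rwa [← hm] at this
    have h4 := ((h3.const_mul (1 - α)).const_sub 1).const_mul (1/α)
    have hfun : (fun τ => F τ s) = fun τ =>
        (1/α) * (1 - (1 - α) * Real.exp (Real.log u * M τ)) := by
      funext τ; rw [hF, Real.rpow_def_of_pos hu0]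
    rw [hfun]
    exact h4.congr_deriv (by ring)
  -- space derivative
  have hFs : HasDerivAt (fun x => F t x)
      ((1/α) * (0 - (1 - α) * ((-α / (1 - α)) * m * u ^ (m - 1)))) s := by
    have hinner : HasDerivAt (fun x => (1 - α * x) / (1 - α)) (-α / (1 - α)) s := by
      have : HasDerivAt (fun x : ℝ => 1 - α * x) (-α) s := by
        simpa using ((hasDerivAt_id s).const_mul α).const_sub 1
      exact this.div_const _
    have hpow : HasDerivAt (fun x => ((1 - α * x) / (1 - α)) ^ m)
        ((-α / (1 - α)) * m * u ^ (m - 1)) s := by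
      have := hinner.rpow_const (p := m) (Or.inl (ne_of_gt hu0))
      simpa [hu, mul_comm, mul_assoc, mul_left_comm] using this
    have h4 := ((hpow.const_mul (1 - α)).const_sub 1).const_mul (1/α)
    have hfun : (fun x => F t x) = fun x =>
        (1/α) * (1 - (1 - α) * ((1 - α * x) / (1 - α)) ^ (M t)) := by
      funext x; rw [hF]
    rw [hfun, ← hm]
    exact h4.congr_deriv (by ring)
  rw [hFt.deriv, hFs.deriv, hf]
  -- key identities
  have hpow1 : u ^ (m - 1) * (1 - α * s) = u ^ m * (1 - α) := by
    rw [Real.rpow_sub hu0, Real.rpow_one]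
    field_simp [hu]
    rw [hu, div_mul_cancel₀ _ (ne_of_gt h1α)]
  have hexp : Real.exp (Real.log u * m) = u ^ m := by
    rw [Real.rpow_def_of_pos hu0]
  have hmc : Real.exp (c * t) = m := hmval.symm
  rw [hexp, hmc, hLog, hc]
  have hAne : A ≠ 0 := ne_of_gt hA0
  field_simp
  linear_combination (-(α^2) * m * K * (A + Real.log (1 - α*s))) * hpow1
end

section
/- Let 0 < α < 1, K > 0, A = -log(1-α), M(t) = exp(-Kα²t/A), and F(t,s) = (1/α)(1 - (1-α)((1-αs)/(1-α))^{M(t)}). Then for every t > 0 and every integer n ≥ 1, the probability P(X(t) = n), defined as the n-th derivative of s ↦ F(t,s) at s = 0 divided by n!, equals (-1/n!)·((1-α)/α)·αⁿ·(-1)ⁿ·[M(t)]_{n↓}/(1-α)^{M(t)}, and this quantity is strictly positive. -/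
private lemma aux2 (α m c1 c2 : ℝ) (hα0 : 0 < α) :
    ∀ (n : ℕ) (s : ℝ), 0 < 1 - α * s →
      iteratedDeriv (n + 1) (fun u => c1 - c2 * (1 - α * u) ^ m) s =
        -c2 * (∏ k ∈ Finset.range (n + 1), (m - k)) * (-α) ^ (n + 1) *
          (1 - α * s) ^ (m - (n + 1)) := by
  have hopen : IsOpen {s : ℝ | 0 < 1 - α * s} :=
    isOpen_lt continuous_const (by continuity)
  intro n
  induction n with
  | zero =>
    intro s hs
    rw [iteratedDeriv_one]
    have hlin : HasDerivAt (fun u : ℝ => 1 - α * u) (-α) s := by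
      simpa using ((hasDerivAt_id s).const_mul α).const_sub 1
    have h1 := ((hlin.rpow_const (p := m) (Or.inl hs.ne')).const_mul c2).const_sub c1
    rw [h1.deriv, Finset.prod_range_one]
    push_cast
    ring
  | succ n ih =>
    intro s hs
    rw [iteratedDeriv_succ]
    have hev : iteratedDeriv (n + 1) (fun u => c1 - c2 * (1 - α * u) ^ m) =ᶠ[nhds s]
        fun u => -c2 * (∏ k ∈ Finset.range (n + 1), (m - k)) * (-α) ^ (n + 1) *
          (1 - α * u) ^ (m - (n + 1)) := by
      filter_upwards [hopen.mem_nhds hs] with u hu using ih u hu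
    rw [hev.deriv_eq]
    have hlin : HasDerivAt (fun u : ℝ => 1 - α * u) (-α) s := by
      simpa using ((hasDerivAt_id s).const_mul α).const_sub 1
    have h1 := (hlin.rpow_const (p := m - ((n : ℝ) + 1)) (Or.inl hs.ne')).const_mul
      (-c2 * (∏ k ∈ Finset.range (n + 1), (m - (k : ℝ))) * (-α) ^ (n + 1))
    rw [h1.deriv,
      show m - ((↑(n + 1) : ℝ) + 1) = m - ((n : ℝ) + 1) - 1 by push_cast; ring]
    conv_rhs => rw [Finset.prod_range_succ]
    push_cast
    ring

theorem stmt_10 (α : ℝ) (hα0 : 0 < α) (hα1 : α < 1)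
    (A : ℝ) (hA : A = -Real.log (1 - α))
    (K : ℝ) (hK : 0 < K)
    (M : ℝ → ℝ) (hM : ∀ t : ℝ, M t = Real.exp (-(K * α ^ 2) * t / A))
    (F : ℝ → ℝ → ℝ)
    (hF : ∀ t s : ℝ,
      F t s = (1 / α) * (1 - (1 - α) * ((1 - α * s) / (1 - α)) ^ (M t)))
    (fallingFactorial : ℝ → ℕ → ℝ)
    (hff : ∀ (x : ℝ) (n : ℕ), fallingFactorial x n = ∏ k ∈ Finset.range n, (x - k)) :
    ∀ t : ℝ, 0 < t → ∀ n : ℕ, 1 ≤ n →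
      iteratedDeriv n (fun s => F t s) 0 / (n.factorial : ℝ) =
        (-1 / (n.factorial : ℝ)) * ((1 - α) / α) *
          (α ^ n * (-1 : ℝ) ^ n * fallingFactorial (M t) n / (1 - α) ^ (M t)) ∧
      0 < (-1 / (n.factorial : ℝ)) * ((1 - α) / α) *
          (α ^ n * (-1 : ℝ) ^ n * fallingFactorial (M t) n / (1 - α) ^ (M t)) := by
  intro t ht n hn
  have h1α : (0 : ℝ) < 1 - α := by linarith
  set m : ℝ := M t with hm
  have hA0 : 0 < A := by
    rw [hA]
    have : Real.log (1 - α) < 0 := Real.log_neg h1α (by linarith)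
    linarith
  have hm0 : 0 < m := by rw [hm, hM]; exact Real.exp_pos _
  have hm1 : m < 1 := by
    rw [hm, hM, Real.exp_lt_one_iff]
    apply div_neg_of_neg_of_pos _ hA0
    have := mul_pos (mul_pos hK (pow_pos hα0 2)) ht
    linarith
  have hD : (0 : ℝ) < (1 - α) ^ m := Real.rpow_pos_of_pos h1α m
  set c2 : ℝ := (1 - α) / α / (1 - α) ^ m with hc2
  have hopen : IsOpen {s : ℝ | 0 < 1 - α * s} :=
    isOpen_lt continuous_const (by continuity)
  have h0mem : (0 : ℝ) ∈ {s : ℝ | 0 < 1 - α * s} := by simp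
  have hev : (fun s => F t s) =ᶠ[nhds (0 : ℝ)]
      fun u => 1 / α - c2 * (1 - α * u) ^ m := by
    filter_upwards [hopen.mem_nhds h0mem] with u hu
    have hu' : (0 : ℝ) < 1 - α * u := hu
    rw [hF, Real.div_rpow hu'.le h1α.le]
    rw [hc2]
    field_simp
    rw [← hm]
    ring
  obtain ⟨n', rfl⟩ : ∃ n', n = n' + 1 := ⟨n - 1, (Nat.succ_pred_eq_of_pos hn).symm⟩
  have hid : iteratedDeriv (n' + 1) (fun s => F t s) 0 =
      -c2 * (∏ k ∈ Finset.range (n' + 1), (m - k)) * (-α) ^ (n' + 1) := by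
    rw [hev.iteratedDeriv_eq, aux2 α m (1 / α) c2 hα0 n' 0 (by norm_num)]
    simp [Real.one_rpow]
  set P : ℝ := ∏ k ∈ Finset.range (n' + 1), (m - k) with hP
  have hPneg : (-1 : ℝ) ^ (n' + 1) * P < 0 := by
    have key : (-1 : ℝ) ^ (n' + 1) * P = ∏ k ∈ Finset.range (n' + 1), ((k : ℝ) - m) := by
      rw [hP]
      calc (-1 : ℝ) ^ (n' + 1) * ∏ k ∈ Finset.range (n' + 1), (m - (k : ℝ))
          = ∏ k ∈ Finset.range (n' + 1), (-1 : ℝ) * (m - (k : ℝ)) := by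
            rw [Finset.prod_mul_distrib, Finset.prod_const, Finset.card_range]
        _ = ∏ k ∈ Finset.range (n' + 1), ((k : ℝ) - m) :=
            Finset.prod_congr rfl fun k _ => by ring
    rw [key, Finset.prod_range_succ']
    apply mul_neg_of_pos_of_neg
    · apply Finset.prod_pos
      intro k _
      have hk : (0 : ℝ) ≤ (k : ℝ) := Nat.cast_nonneg k
      push_cast
      linarith
    · simpa using hm0
  constructor
  · rw [hid, hff, ← hP, hc2]
    have hfac : (0 : ℝ) < ((n' + 1).factorial : ℝ) := by positivity
    field_simp
    rw [neg_pow (α) (n' + 1)]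
    ring
  · rw [hff, ← hP]
    have h1 : (-1 / ((n' + 1).factorial : ℝ)) * ((1 - α) / α) < 0 := by
      apply mul_neg_of_neg_of_pos
      · apply div_neg_of_neg_of_pos
        · norm_num
        · positivity
      · positivity
    have h2 : α ^ (n' + 1) * (-1 : ℝ) ^ (n' + 1) * P / (1 - α) ^ m < 0 := by
      apply div_neg_of_neg_of_pos _ hD
      have hαp : (0 : ℝ) < α ^ (n' + 1) := by positivity
      calc α ^ (n' + 1) * (-1 : ℝ) ^ (n' + 1) * P
          = α ^ (n' + 1) * ((-1 : ℝ) ^ (n' + 1) * P) := by ring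
        _ < 0 := mul_neg_of_pos_of_neg hαp hPneg
    exact mul_pos_of_neg_of_neg h1 h2
end

section
/- Let 0 < α < 1, K > 0, A = -log(1-α), M(t) = exp(-Kα²t/A), and F(t,s) = (1/α)(1 - (1-α)((1-αs)/(1-α))^{M(t)}). Then for every t > 0 and every integer n ≥ 1, the n-th factorial moment E[X(t)]_{n↓}, defined as the n-th derivative of s ↦ F(t,s) at s = 1, equals -((1-α)/α)·αⁿ·(-1)ⁿ·[M(t)]_{n↓}/(1-α)ⁿ, and this quantity is strictly positive. -/
private lemma rpow_aux (α y : ℝ) (h1α : 0 < 1 - α) (s : ℝ) (hs : 0 < 1 - α * s) :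
    HasDerivAt (fun x : ℝ => ((1 - α * x) / (1 - α)) ^ y)
      (y * ((1 - α * s) / (1 - α)) ^ (y - 1) * (-α / (1 - α))) s := by
  have hu : (0:ℝ) < (1 - α * s) / (1 - α) := div_pos hs h1α
  have hinner : HasDerivAt (fun x : ℝ => (1 - α * x) / (1 - α)) (-α / (1 - α)) s := by
    have h : HasDerivAt (fun x : ℝ => 1 - α * x) (-α) s := by
      simpa using ((hasDerivAt_id s).const_mul α).const_sub 1
    simpa using h.div_const (1 - α)
  have houter := Real.hasDerivAt_rpow_const (x := (1 - α * s) / (1 - α)) (p := y)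
    (Or.inl (ne_of_gt hu))
  refine (houter.comp s hinner).congr_deriv ?_
  ring

theorem stmt_11 (α : ℝ) (hα0 : 0 < α) (hα1 : α < 1)
    (A : ℝ) (hA : A = -Real.log (1 - α))
    (K : ℝ) (hK : 0 < K)
    (M : ℝ → ℝ) (hM : ∀ t : ℝ, M t = Real.exp (-(K * α ^ 2) * t / A))
    (F : ℝ → ℝ → ℝ)
    (hF : ∀ t s : ℝ,
      F t s = (1 / α) * (1 - (1 - α) * ((1 - α * s) / (1 - α)) ^ (M t)))
    (fallingFactorial : ℝ → ℕ → ℝ)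
    (hff : ∀ (x : ℝ) (n : ℕ), fallingFactorial x n = ∏ k ∈ Finset.range n, (x - k)) :
    ∀ t : ℝ, 0 < t → ∀ n : ℕ, 1 ≤ n →
      iteratedDeriv n (fun s => F t s) 1 =
        -((1 - α) / α) *
          (α ^ n * (-1 : ℝ) ^ n * fallingFactorial (M t) n / (1 - α) ^ n) ∧
      0 < -((1 - α) / α) *
          (α ^ n * (-1 : ℝ) ^ n * fallingFactorial (M t) n / (1 - α) ^ n) := by
  intro t ht n hn
  have h1α : (0:ℝ) < 1 - α := by linarith
  have hA0 : 0 < A := by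
    rw [hA]
    have : Real.log (1 - α) < 0 := Real.log_neg h1α (by linarith)
    linarith
  have hM0 : 0 < M t := by rw [hM]; exact Real.exp_pos _
  have hM1 : M t < 1 := by
    rw [hM]
    have hx : -(K * α ^ 2) * t / A < 0 := by
      apply div_neg_of_neg_of_pos _ hA0
      have : 0 < K * α ^ 2 := by positivity
      nlinarith
    calc Real.exp (-(K * α ^ 2) * t / A) < Real.exp 0 := Real.exp_lt_exp.mpr hx
      _ = 1 := Real.exp_zero
  -- the open set where computations are valid
  have hUopen : IsOpen {s : ℝ | 0 < 1 - α * s} :=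
    isOpen_lt continuous_const (by continuity)
  have hFf : F t = fun s => 1 / α * (1 - (1 - α) * ((1 - α * s) / (1 - α)) ^ (M t)) :=
    funext (hF t)
  -- key derivative computation
  have key : ∀ m : ℕ, 1 ≤ m → ∀ s : ℝ, 0 < 1 - α * s →
      iteratedDeriv m (F t) s =
        (-(1 - α) / α) * (∏ k ∈ Finset.range m, (M t - k)) * (-α / (1 - α)) ^ m *
          ((1 - α * s) / (1 - α)) ^ (M t - m) := by
    intro m hm
    induction m, hm using Nat.le_induction with
    | base =>
      intro s hs
      rw [iteratedDeriv_one]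
      have hD : HasDerivAt (F t)
          ((1 / α) * (-((1 - α) *
            (M t * ((1 - α * s) / (1 - α)) ^ (M t - 1) * (-α / (1 - α)))))) s := by
        rw [hFf]
        exact (((rpow_aux α (M t) h1α s hs).const_mul (1 - α)).const_sub 1).const_mul (1 / α)
      rw [hD.deriv]
      simp only [Finset.prod_range_one, Nat.cast_zero, Nat.cast_one, pow_one, sub_zero]
      field_simp
    | succ m hm ih =>
      intro s hs
      rw [iteratedDeriv_succ]
      have heq : iteratedDeriv m (F t) =ᶠ[nhds s]
          fun x => (-(1 - α) / α) * (∏ k ∈ Finset.range m, (M t - k)) * (-α / (1 - α)) ^ m *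
            ((1 - α * x) / (1 - α)) ^ (M t - m) := by
        filter_upwards [hUopen.mem_nhds hs] with x hx
        exact ih x hx
      rw [heq.deriv_eq]
      have hD : HasDerivAt
          (fun x => (-(1 - α) / α) * (∏ k ∈ Finset.range m, (M t - k)) * (-α / (1 - α)) ^ m *
            ((1 - α * x) / (1 - α)) ^ (M t - m))
          ((-(1 - α) / α) * (∏ k ∈ Finset.range m, (M t - k)) * (-α / (1 - α)) ^ m *
            ((M t - m) * ((1 - α * s) / (1 - α)) ^ (M t - m - 1) * (-α / (1 - α)))) s :=
        (rpow_aux α (M t - m) h1α s hs).const_mul _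
      rw [hD.deriv]
      rw [Finset.prod_range_succ]
      have hexp : M t - ↑m - 1 = M t - ↑(m + 1) := by push_cast; ring
      rw [hexp]
      ring
  have hs1 : (0:ℝ) < 1 - α * 1 := by linarith
  have hone : ((1 - α * 1) / (1 - α) : ℝ) = 1 := by
    rw [mul_one]; exact div_self (ne_of_gt h1α)
  have hprodneg : ∏ k ∈ Finset.range n, ((k:ℝ) - M t) < 0 := by
    induction n, hn using Nat.le_induction with
    | base => simpa using hM0
    | succ m hm ih =>
      rw [Finset.prod_range_succ]
      apply mul_neg_of_neg_of_pos ih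
      have : (1:ℝ) ≤ (m:ℝ) := by exact_mod_cast hm
      linarith
  have hval := key n hn 1 hs1
  rw [hone, Real.one_rpow, mul_one] at hval
  have hprodeq : ∏ k ∈ Finset.range n, ((k:ℝ) - M t) =
      (-1 : ℝ) ^ n * ∏ k ∈ Finset.range n, (M t - k) := by
    calc ∏ k ∈ Finset.range n, ((k:ℝ) - M t)
        = ∏ k ∈ Finset.range n, ((-1 : ℝ) * (M t - k)) :=
          Finset.prod_congr rfl fun k _ => by ring
      _ = (∏ _k ∈ Finset.range n, (-1 : ℝ)) * ∏ k ∈ Finset.range n, (M t - k) :=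
          Finset.prod_mul_distrib
      _ = (-1 : ℝ) ^ n * ∏ k ∈ Finset.range n, (M t - k) := by
          rw [Finset.prod_const, Finset.card_range]
  have hq : (-1 : ℝ) ^ n * ∏ k ∈ Finset.range n, (M t - k) < 0 := hprodeq ▸ hprodneg
  constructor
  · rw [hval, hff, div_pow, ← neg_one_mul α, mul_pow]
    field_simp
  · rw [hff]
    have heqn : -((1 - α) / α) *
        (α ^ n * (-1 : ℝ) ^ n * (∏ k ∈ Finset.range n, (M t - k)) / (1 - α) ^ n) =
        ((1 - α) / α) * (α ^ n / (1 - α) ^ n) *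
          (-((-1 : ℝ) ^ n * ∏ k ∈ Finset.range n, (M t - k))) := by ring
    rw [heqn]
    apply mul_pos (by positivity)
    linarith
end

section
/- Let 0 < α < 1, K > 0, A = -log(1-α), and M(t) = exp(-Kα²t/A). Then for every s ∈ [0,1], the conditional probability generating function converges as t → ∞: lim_{t→∞} (1 - (1-αs)^{M(t)})/(1 - (1-α)^{M(t)}) = log(1-αs)/log(1-α) = -log(1-αs)/A, which is the probability generating function of the logarithmic series distribution (for s = 1 the limit equals 1). -/
open Filter

lemma aux_slope {x : ℝ} (hx : 0 < x) :
    Tendsto (fun m : ℝ => (x ^ m - 1) / m) (nhdsWithin 0 {0}ᶜ) (nhds (Real.log x)) := by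
  have h := (Real.hasStrictDerivAt_const_rpow hx 0).hasDerivAt
  rw [hasDerivAt_iff_tendsto_slope] at h
  simp only [Real.rpow_zero, one_mul] at h
  refine h.congr' ?_
  filter_upwards [self_mem_nhdsWithin] with m hm
  simp [slope, hm, div_eq_inv_mul]

theorem stmt_17 (α : ℝ) (hα0 : 0 < α) (hα1 : α < 1)
    (A : ℝ) (hA : A = -Real.log (1 - α))
    (K : ℝ) (hK : 0 < K)
    (M : ℝ → ℝ) (hM : ∀ t : ℝ, M t = Real.exp (-(K * α ^ 2) * t / A)) :
    ∀ s ∈ Set.Icc (0 : ℝ) 1,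
      Tendsto (fun t => (1 - (1 - α * s) ^ (M t)) / (1 - (1 - α) ^ (M t)))
        atTop (nhds (Real.log (1 - α * s) / Real.log (1 - α))) ∧
      Real.log (1 - α * s) / Real.log (1 - α) = -Real.log (1 - α * s) / A := by
  intro s hs
  obtain ⟨hs0, hs1⟩ := hs
  have hy0 : (0:ℝ) < 1 - α := by linarith
  have hlogy : Real.log (1 - α) < 0 := Real.log_neg hy0 (by linarith)
  have hA0 : 0 < A := by rw [hA]; linarith
  have hx0 : (0:ℝ) < 1 - α * s := by nlinarith
  -- M tends to 0
  have hMpos : ∀ t, 0 < M t := fun t => by rw [hM]; exact Real.exp_pos _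
  have hMt : Tendsto M atTop (nhds 0) := by
    have h1 : Tendsto (fun t : ℝ => -(K * α ^ 2) * t / A) atTop atBot := by
      have hc : -(K * α ^ 2) / A < 0 := by
        apply div_neg_of_neg_of_pos _ hA0
        have := mul_pos hK (pow_pos hα0 2); linarith
      have := tendsto_id.const_mul_atTop_of_neg (r := -(K * α ^ 2) / A) hc
      exact this.congr (fun t => by simp only [id]; ring)
    have := Real.tendsto_exp_atBot.comp h1
    exact this.congr (fun t => (hM t).symm)
  have hMt' : Tendsto M atTop (nhdsWithin 0 {0}ᶜ) :=
    tendsto_nhdsWithin_of_tendsto_nhds_of_eventually_within _ hMt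
      (Eventually.of_forall fun t => (hMpos t).ne')
  have hX := (aux_slope hx0).comp hMt'
  have hY := (aux_slope hy0).comp hMt'
  have hdiv := hX.div hY hlogy.ne
  constructor
  · refine hdiv.congr (fun t => ?_)
    have hm := (hMpos t).ne'
    simp only [Pi.div_apply, Function.comp_apply]
    have hb : (1 - α) ^ M t - 1 ≠ 0 := by
      have : (1 - α) ^ M t < 1 := Real.rpow_lt_one (le_of_lt hy0) (by linarith) (hMpos t)
      linarith
    have hb' : 1 - (1 - α) ^ M t ≠ 0 := fun h => hb (by linarith [h])
    field_simp
    ring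
  · rw [hA, neg_div_neg_eq]
end

section
/- Let 0 < α < 1, K > 0, A = -log(1-α), and M(t) = exp(-Kα²t/A). Then for every integer n ≥ 1, the conditional probability converges as t → ∞: lim_{t→∞} (-1/n!)·αⁿ·(-1)ⁿ·[M(t)]_{n↓}/(1 - (1-α)^{M(t)}) = αⁿ/(A·n). That is, the conditional limit distribution of X(t) given X(t) > 0 is the logarithmic series distribution P(ξ = n) = αⁿ/(A·n). -/
open Filter

theorem stmt_18 (α : ℝ) (hα0 : 0 < α) (hα1 : α < 1)
    (A : ℝ) (hA : A = -Real.log (1 - α))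
    (K : ℝ) (hK : 0 < K)
    (M : ℝ → ℝ) (hM : ∀ t : ℝ, M t = Real.exp (-(K * α ^ 2) * t / A))
    (fallingFactorial : ℝ → ℕ → ℝ)
    (hff : ∀ (x : ℝ) (n : ℕ), fallingFactorial x n = ∏ k ∈ Finset.range n, (x - k)) :
    ∀ n : ℕ, 1 ≤ n →
      Tendsto
        (fun t => (-1 / (n.factorial : ℝ)) *
          (α ^ n * (-1 : ℝ) ^ n * fallingFactorial (M t) n / (1 - (1 - α) ^ (M t))))
        atTop (nhds (α ^ n / (A * n))) := by
  intro n hn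
  obtain ⟨m, rfl⟩ : ∃ m, n = m + 1 := ⟨n - 1, (Nat.succ_pred_eq_of_pos hn).symm⟩
  set L := Real.log (1 - α) with hLdef
  have h1α : 0 < 1 - α := by linarith
  have hLneg : L < 0 := Real.log_neg h1α (by linarith)
  have hApos : 0 < A := by rw [hA]; linarith
  -- derivative of x ↦ (1-α)^x at 0 is L
  have hderiv : HasDerivAt (fun x : ℝ => (1 - α) ^ x) L 0 := by
    simpa using (Real.hasStrictDerivAt_const_rpow h1α 0).hasDerivAt
  have hslope' : Tendsto (fun x : ℝ => ((1 - α) ^ x - 1) / x)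
      (nhdsWithin 0 {(0:ℝ)}ᶜ) (nhds L) := by
    have h := hasDerivAt_iff_tendsto_slope.mp hderiv
    refine h.congr fun x => ?_
    rw [slope_def_field, Real.rpow_zero, sub_zero]
  have hratio : Tendsto (fun x : ℝ => x / (1 - (1 - α) ^ x))
      (nhdsWithin 0 {(0:ℝ)}ᶜ) (nhds A⁻¹) := by
    have h := (hslope'.inv₀ (ne_of_lt hLneg)).neg
    have hval : -(L⁻¹) = A⁻¹ := by rw [hA]; rw [← neg_inv]
    rw [hval] at h
    refine h.congr fun x => ?_
    rw [inv_div, ← div_neg, neg_sub]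
  -- product part
  have hprodcont : Tendsto (fun x : ℝ => ∏ k ∈ Finset.range m, (x - ((k:ℝ) + 1)))
      (nhdsWithin 0 {(0:ℝ)}ᶜ) (nhds ((-1 : ℝ) ^ m * (m.factorial : ℝ))) := by
    have hc : Continuous fun x : ℝ => ∏ k ∈ Finset.range m, (x - ((k:ℝ) + 1)) := by
      apply continuous_finset_prod
      intro i _
      exact continuous_id.sub continuous_const
    have h0 : ∀ p : ℕ, (∏ k ∈ Finset.range p, ((0:ℝ) - ((k:ℝ) + 1))) = (-1 : ℝ) ^ p * (p.factorial : ℝ) := by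
      intro p
      induction p with
      | zero => simp
      | succ q ih =>
        rw [Finset.prod_range_succ, ih]
        push_cast [Nat.factorial_succ]
        ring
    have := hc.tendsto 0
    rw [h0 m] at this
    exact this.mono_left nhdsWithin_le_nhds
  set C : ℝ := (-1 / ((m + 1).factorial : ℝ)) * (α ^ (m + 1) * (-1 : ℝ) ^ (m + 1)) with hC
  have hcomb : Tendsto
      (fun x : ℝ => C * ((∏ k ∈ Finset.range m, (x - ((k:ℝ) + 1))) * (x / (1 - (1 - α) ^ x))))
      (nhdsWithin 0 {(0:ℝ)}ᶜ)
      (nhds (C * (((-1 : ℝ) ^ m * (m.factorial : ℝ)) * A⁻¹))) :=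
    tendsto_const_nhds.mul (hprodcont.mul hratio)
  -- M tends to 0 within {0}ᶜ
  have hMtend : Tendsto M atTop (nhdsWithin 0 {(0:ℝ)}ᶜ) := by
    have hlin : Tendsto (fun t : ℝ => -(K * α ^ 2) * t / A) atTop atBot := by
      rw [tendsto_div_const_atBot_of_pos hApos]
      exact (tendsto_const_mul_atBot_of_neg (by nlinarith [mul_pos hK (pow_pos hα0 2)])).mpr tendsto_id
    have hexp : Tendsto M atTop (nhdsWithin 0 (Set.Ioi (0:ℝ))) := by
      have := Real.tendsto_exp_atBot_nhdsGT.comp hlin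
      refine this.congr fun t => (hM t).symm
    exact hexp.mono_right (nhdsWithin_mono 0 fun x hx => ne_of_gt hx)
  have hfinal := hcomb.comp hMtend
  have heq : (fun t => (-1 / (((m+1).factorial : ℝ))) *
      (α ^ (m+1) * (-1 : ℝ) ^ (m+1) * fallingFactorial (M t) (m+1) / (1 - (1 - α) ^ (M t)))) =
      (fun x : ℝ => C * ((∏ k ∈ Finset.range m, (x - ((k:ℝ) + 1))) * (x / (1 - (1 - α) ^ x)))) ∘ M := by
    funext t
    simp only [Function.comp, hC, hff, Finset.prod_range_succ']
    push_cast
    ring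
  have hvaleq : C * (((-1 : ℝ) ^ m * (m.factorial : ℝ)) * A⁻¹) = α ^ (m+1) / (A * (m+1)) := by
    rw [hC]
    have hfac : ((m+1).factorial : ℝ) = (m+1) * (m.factorial : ℝ) := by
      push_cast [Nat.factorial_succ]; ring
    have hm1 : ((m:ℝ) + 1) ≠ 0 := by positivity
    have hfne : (m.factorial : ℝ) ≠ 0 := Nat.cast_ne_zero.mpr m.factorial_ne_zero
    have h2 : ((-1 : ℝ)) ^ (m * 2) = 1 := Even.neg_one_pow ⟨m, by ring⟩
    rw [hfac]
    field_simp
    ring_nf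
    simp only [h2]
  rw [heq]
  push_cast
  rw [← hvaleq]
  exact hfinal
end

section
/- Let 0 < α < 1, K > 0, A = -log(1-α), and M(t) = exp(-Kα²t/A). Then for every integer n ≥ 1, the conditional n-th factorial moment converges as t → ∞: lim_{t→∞} [ -(αⁿ·(-1)ⁿ·[M(t)]_{n↓}/(1 - (1-α)^{M(t)}))·((1-α)^{M(t)}/(1-α)ⁿ) ] = ((n-1)!/A)·(α/(1-α))ⁿ, and this limit is strictly positive; it is the n-th factorial moment of the logarithmic series distribution with P(ξ=n) = αⁿ/(A·n). -/
open Filter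

lemma prodneg_aux (m : ℕ) :
    ∏ k ∈ Finset.range m, ((0:ℝ) - ((k:ℝ) + 1)) = (-1) ^ m * m.factorial := by
  induction m with
  | zero => simp
  | succ j ih =>
      rw [Finset.prod_range_succ, ih]
      push_cast [Nat.factorial_succ]
      ring

lemma keylim_aux (L : ℝ) (hL : L ≠ 0) :
    Tendsto (fun m : ℝ => m / (1 - Real.exp (L * m)))
      (nhdsWithin 0 {(0:ℝ)}ᶜ) (nhds (-L)⁻¹) := by
  have h2 : HasDerivAt (fun m : ℝ => L * m) L 0 := by
    simpa using (hasDerivAt_id (0:ℝ)).const_mul L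
  have h1 : HasDerivAt (fun m : ℝ => 1 - Real.exp (L * m)) (-L) 0 := by
    exact ((hasDerivAt_const (0:ℝ) (1:ℝ)).sub h2.exp).congr_deriv (by simp)
  have h4 := hasDerivAt_iff_tendsto_slope.mp h1
  have h5 := h4.inv₀ (neg_ne_zero.mpr hL)
  refine h5.congr fun m => ?_
  simp [slope_def_field, inv_div]

theorem stmt_19 (α : ℝ) (hα0 : 0 < α) (hα1 : α < 1)
    (A : ℝ) (hA : A = -Real.log (1 - α))
    (K : ℝ) (hK : 0 < K)
    (M : ℝ → ℝ) (hM : ∀ t : ℝ, M t = Real.exp (-(K * α ^ 2) * t / A))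
    (fallingFactorial : ℝ → ℕ → ℝ)
    (hff : ∀ (x : ℝ) (n : ℕ), fallingFactorial x n = ∏ k ∈ Finset.range n, (x - k)) :
    ∀ n : ℕ, 1 ≤ n →
      Tendsto
        (fun t =>
          -(α ^ n * (-1 : ℝ) ^ n * fallingFactorial (M t) n / (1 - (1 - α) ^ (M t))) *
            ((1 - α) ^ (M t) / (1 - α) ^ n))
        atTop (nhds (((n - 1).factorial : ℝ) / A * (α / (1 - α)) ^ n)) ∧
      0 < ((n - 1).factorial : ℝ) / A * (α / (1 - α)) ^ n := by
  have h1α : 0 < 1 - α := by linarith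
  set L := Real.log (1 - α) with hLdef
  have hL : L < 0 := Real.log_neg h1α (by linarith)
  have hA0 : 0 < A := by rw [hA]; linarith
  have hpow : ∀ m : ℝ, (1 - α) ^ (m : ℝ) = Real.exp (L * m) := fun m =>
    Real.rpow_def_of_pos h1α m
  intro n hn
  obtain ⟨j, rfl⟩ : ∃ j, n = j + 1 := ⟨n - 1, (Nat.succ_pred_eq_of_pos hn).symm⟩
  constructor
  · -- the limit
    have hM0 : Tendsto M atTop (nhdsWithin 0 (Set.Ioi (0:ℝ))) := by
      rw [tendsto_nhdsWithin_iff]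
      constructor
      · have hc : (-(K * α ^ 2) / A) < 0 := div_neg_of_neg_of_pos (by have := mul_pos hK (pow_pos hα0 2); linarith) hA0
        have hlin : Tendsto (fun t : ℝ => -(K * α ^ 2) * t / A) atTop atBot := by
          have := (tendsto_id (α := ℝ)).const_mul_atTop_of_neg hc
          refine this.congr fun t => ?_
          simp [mul_div_assoc, mul_comm, mul_div_right_comm]
          ring
        have h0 := Real.tendsto_exp_atBot.comp hlin
        have hMe : M = fun t => Real.exp (-(K * α ^ 2) * t / A) := funext hM
        rw [hMe]; exact h0
      · exact Eventually.of_forall fun t => by rw [hM t]; exact Real.exp_pos _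
    set G : ℝ → ℝ := fun m =>
      (α ^ (j + 1) / (1 - α) ^ (j + 1)) * Real.exp (L * m) *
        (-(-1 : ℝ) ^ (j + 1) * ∏ k ∈ Finset.range j, (m - ((k : ℝ) + 1))) *
        (m / (1 - Real.exp (L * m))) with hGdef
    have hT1 : Tendsto (fun m : ℝ => Real.exp (L * m)) (nhdsWithin 0 (Set.Ioi (0:ℝ))) (nhds 1) := by
      have hc : Continuous fun m : ℝ => Real.exp (L * m) :=
        Real.continuous_exp.comp (continuous_const.mul continuous_id)
      simpa using (hc.tendsto 0).mono_left nhdsWithin_le_nhds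
    have hT2 : Tendsto (fun m : ℝ => ∏ k ∈ Finset.range j, (m - ((k : ℝ) + 1)))
        (nhdsWithin 0 (Set.Ioi (0:ℝ)))
        (nhds (∏ k ∈ Finset.range j, ((0:ℝ) - ((k : ℝ) + 1)))) := by
      have hc : Continuous fun m : ℝ => ∏ k ∈ Finset.range j, (m - ((k : ℝ) + 1)) :=
        continuous_finset_prod _ fun k _ => continuous_id.sub continuous_const
      exact (hc.tendsto 0).mono_left nhdsWithin_le_nhds
    have hT3 : Tendsto (fun m : ℝ => m / (1 - Real.exp (L * m)))
        (nhdsWithin 0 (Set.Ioi (0:ℝ))) (nhds (-L)⁻¹) :=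
      (keylim_aux L hL.ne).mono_left
        (nhdsWithin_mono 0 fun x hx => Set.mem_compl_singleton_iff.mpr (ne_of_gt hx))
    have hG : Tendsto G (nhdsWithin 0 (Set.Ioi (0:ℝ)))
        (nhds ((α ^ (j + 1) / (1 - α) ^ (j + 1)) * 1 *
          (-(-1 : ℝ) ^ (j + 1) * ∏ k ∈ Finset.range j, ((0:ℝ) - ((k : ℝ) + 1))) * (-L)⁻¹)) :=
      (((tendsto_const_nhds.mul hT1)).mul (tendsto_const_nhds.mul hT2)).mul hT3
    have hcomp := hG.comp hM0
    have hval : (α ^ (j + 1) / (1 - α) ^ (j + 1)) * 1 *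
          (-(-1 : ℝ) ^ (j + 1) * ∏ k ∈ Finset.range j, ((0:ℝ) - ((k : ℝ) + 1))) * (-L)⁻¹
        = (((j + 1 - 1).factorial : ℝ) / A * (α / (1 - α)) ^ (j + 1)) := by
      have hsq : ((-1 : ℝ) ^ j) * ((-1 : ℝ) ^ j) = 1 := by
        rw [← pow_add]
        exact Even.neg_one_pow ⟨j, rfl⟩
      rw [prodneg_aux, Nat.add_sub_cancel, div_pow, hA]
      have h : -(-1 : ℝ) ^ (j + 1) * ((-1 : ℝ) ^ j * (j.factorial : ℝ)) = j.factorial := by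
        rw [pow_succ]; linear_combination (j.factorial : ℝ) * hsq
      rw [h]; ring
    rw [← hval]
    refine hcomp.congr fun t => ?_
    simp only [Function.comp, hGdef, hff, hpow]
    rw [Finset.prod_range_succ']
    push_cast
    ring
  · -- positivity
    have h1 : (0:ℝ) < ((j + 1 - 1).factorial : ℝ) := by positivity
    have h2 : (0:ℝ) < (α / (1 - α)) ^ (j + 1) := pow_pos (div_pos hα0 h1α) _
    exact mul_pos (div_pos h1 hA0) h2
end
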